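/- Let d be a positive integer and let n ≥ 2. For a labeled tree T on the vertex set {1,...,n}, let X_d(T) denote the number of vertices of T of degree d. Then the polynomial ∑_T g^(X_d(T)) in the indeterminate g, where the sum ranges over all labeled trees T on {1,...,n}, equals (n-2)! times the coefficient of z^(n-2) in the formal power series (e^z + (g-1)·z^(d-1)/(d-1)!)^n, viewed as a power series in z with coefficients in the polynomial ring ℚ[g]. -/

import Mathlib

/-!
Removing a leaf `v` of a tree and remembering its neighbour `u` is a bijection onto the pairs
`(u, T')` with `T'` a tree on the remaining vertices whose degree at `u` is one less. By
induction this gives the classical count `(n-2)! / ∏ᵥ (c v - 1)!` of labelled trees with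
degree sequence `c`. Hence, for any weight `w`, `∑_T ∏ᵥ w (deg_T v)` is `(n-2)!` times the
coefficient of `z^(n-2)` in `(∑ₖ w (k+1) z^k / k!)^n`; weighting degree `d` by `g` and every
other degree by `1` turns that series into `e^z + (g-1) z^(d-1) / (d-1)!`.
-/

open scoped Classical
open Finset Nat

lemma Fintype.card_compl_singleton {V : Type*} [Fintype V] (v : V) :
    Fintype.card ({v}ᶜ : Set V) = Fintype.card V - 1 := by
  rw [← Set.toFinset_card, Set.toFinset_compl, card_compl, Set.toFinset_singleton, card_singleton]

lemma Fintype.exists_eq_zero_of_sum_lt_card {ι : Type*} [Fintype ι] {l : ι → ℕ}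
    (h : ∑ i, l i < Fintype.card ι) : ∃ i, l i = 0 := by
  obtain ⟨i, -, hi⟩ := exists_lt_of_sum_lt (s := univ) (g := fun _ => 1) (by simpa using h)
  exact ⟨i, Nat.lt_one_iff.mp hi⟩

section UpdatePred

variable {ι : Type*} [Fintype ι] [DecidableEq ι] {l : ι → ℕ} {u : ι}

lemma Fintype.sum_update_pred_add_one (hu : l u ≠ 0) :
    ∑ i, Function.update l u (l u - 1) i + 1 = ∑ i, l i := by
  have hrest : ∑ i ∈ {u}ᶜ, Function.update l u (l u - 1) i = ∑ i ∈ {u}ᶜ, l i :=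
    Finset.sum_congr rfl fun i hi => Function.update_of_ne (by simpa using hi) _ _
  rw [Fintype.sum_eq_add_sum_compl u, Fintype.sum_eq_add_sum_compl u l, Function.update_self, hrest]
  omega

lemma Fintype.prod_factorial_eq_mul_prod_factorial_update_pred (hu : l u ≠ 0) :
    ∏ i, (l i)! = l u * ∏ i, (Function.update l u (l u - 1) i)! := by
  have hrest : ∏ i ∈ {u}ᶜ, (Function.update l u (l u - 1) i)! = ∏ i ∈ {u}ᶜ, (l i)! :=
    Finset.prod_congr rfl fun i hi => by rw [Function.update_of_ne (by simpa using hi)]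
  rw [Fintype.prod_eq_mul_prod_compl u, Fintype.prod_eq_mul_prod_compl u
    (fun i => (Function.update l u (l u - 1) i)!), Function.update_self, hrest, ← mul_assoc,
    Nat.mul_factorial_pred hu]

end UpdatePred

namespace SimpleGraph

variable {V : Type*} {G : SimpleGraph V} {v : V}

lemma ext_of_induce_compl_singleton {G₁ G₂ : SimpleGraph V}
    (h : G₁.induce {v}ᶜ = G₂.induce {v}ᶜ) (hv : ∀ w, G₁.Adj v w ↔ G₂.Adj v w) : G₁ = G₂ := by
  ext a b
  by_cases ha : a = v
  · subst ha
    exact hv b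
  by_cases hb : b = v
  · subst hb
    rw [G₁.adj_comm, G₂.adj_comm]
    exact hv a
  exact Iff.of_eq (congrArg (·.Adj ⟨a, ha⟩ ⟨b, hb⟩) h)

lemma IsAcyclic.of_induce_compl_singleton (h : (G.induce {v}ᶜ).IsAcyclic)
    (hv : (G.neighborSet v).Subsingleton) : G.IsAcyclic := by
  intro w c hc
  by_cases hvc : v ∈ c.support
  · have hc' := hc.rotate hvc
    have hnil := hc'.not_nil
    exact hc'.snd_ne_penultimate (hv (Walk.adj_snd hnil) (Walk.adj_penultimate hnil).symm)
  · have hs : ∀ x ∈ c.support, x ∈ ({v}ᶜ : Set V) := fun x hx hxv => hvc (hxv ▸ hx)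
    refine h (c.induce _ hs) ?_
    rwa [← Walk.isCycle_map_iff_of_injective (f := (Embedding.induce (G := G) {v}ᶜ).toHom)
      (Embedding.induce (G := G) _).injective, Walk.map_induce]

lemma Connected.of_induce_compl_singleton {u : V} (h : (G.induce {v}ᶜ).Connected)
    (hu : G.Adj v u) : G.Connected := by
  have hreach : ∀ w, G.Reachable w v := by
    intro w
    by_cases hw : w = v
    · rw [hw]
    · have := (h.preconnected ⟨w, hw⟩ ⟨u, hu.ne'⟩).map (Embedding.induce _).toHom
      exact this.trans hu.symm.reachable
  exact (connected_iff_exists_forall_reachable G).mpr ⟨v, fun w => (hreach w).symm⟩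

section Finite

variable [Fintype V]

lemma exists_neighborSet_eq_singleton_of_degree_eq_one (hv : G.degree v = 1) :
    ∃ u, G.neighborSet v = {u} := by
  obtain ⟨u, hu⟩ := card_eq_one.mp ((card_neighborFinset_eq_degree G v).trans hv)
  exact ⟨u, by simpa [Set.ext_iff, Finset.ext_iff] using hu⟩

/-- Stated for any `H` equal to `G.induce {v}ᶜ` so that `H.degree` uses the caller's instances,
not the ones synthesized for the induced graph. -/
theorem degree_eq_degree_add_of_induce_compl_singleton_eq
    {H : SimpleGraph ({v}ᶜ : Set V)} (hH : G.induce {v}ᶜ = H) (w : ({v}ᶜ : Set V)) :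
    G.degree w = H.degree w + if G.Adj w v then 1 else 0 := by
  subst hH
  have h := congrArg card (map_neighborFinset_induce (G := G) (s := {v}ᶜ) w)
  have herase : G.neighborFinset w ∩ ({v}ᶜ : Set V).toFinset = (G.neighborFinset w).erase v := by
    ext; simp [and_comm]
  rw [card_map, herase, card_neighborFinset_eq_degree] at h
  rw [← card_neighborFinset_eq_degree G]
  split_ifs with hwv
  · rw [← card_erase_add_one ((mem_neighborFinset G w v).mpr hwv)]
    convert congrArg (· + 1) h.symm
  · rw [erase_eq_of_notMem (by simpa using hwv)] at h
    rw [add_zero]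
    convert h.symm

lemma isTree_iff_induce_compl_singleton (hv : G.degree v = 1) :
    G.IsTree ↔ (G.induce {v}ᶜ).IsTree := by
  obtain ⟨u, hu⟩ := exists_neighborSet_eq_singleton_of_degree_eq_one hv
  refine ⟨fun h => ⟨h.connected.induce_compl_singleton_of_degree_eq_one hv, h.isAcyclic.induce _⟩,
    fun h => ⟨h.connected.of_induce_compl_singleton (u := u) (by simp [← mem_neighborSet, hu]),
      h.isAcyclic.of_induce_compl_singleton (by simp [hu])⟩⟩

lemma IsTree.sum_degree_sub_one_add_two [Nontrivial V] (hG : G.IsTree) :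
    ∑ v, (G.degree v - 1) + 2 = Fintype.card V := by
  have hpos := hG.connected.preconnected.degree_pos_of_nontrivial (G := G)
  have hsum := G.sum_degrees_eq_twice_card_edges
  have hedges := hG.card_edgeFinset
  have : ∑ v, (G.degree v - 1 + 1) = ∑ v, G.degree v :=
    sum_congr rfl fun v _ => Nat.sub_add_cancel (hpos v)
  rw [sum_add_distrib, sum_const, Finset.card_univ, smul_eq_mul, mul_one] at this
  omega

end Finite

def addLeaf (T : SimpleGraph ({v}ᶜ : Set V)) (u : ({v}ᶜ : Set V)) : SimpleGraph V :=
  T.map (Function.Embedding.subtype _) ⊔ edge v u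

section addLeaf

variable {T : SimpleGraph ({v}ᶜ : Set V)} {u : ({v}ᶜ : Set V)}

lemma addLeaf_adj_leaf {w : V} : (T.addLeaf u).Adj v w ↔ w = u := by
  have := u.2
  simp only [addLeaf, sup_adj, map_adj, edge_adj]
  aesop

lemma induce_addLeaf : (T.addLeaf u).induce {v}ᶜ = T := by
  ext a b
  have ha : (a : V) ≠ v := a.2
  have hb : (b : V) ≠ v := b.2
  simp only [addLeaf, comap_adj, sup_adj, map_adj, edge_adj]
  simp [ha, hb, ← Subtype.ext_iff]

lemma addLeaf_induce (hv : G.neighborSet v = {(u : V)}) : (G.induce {v}ᶜ).addLeaf u = G :=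
  ext_of_induce_compl_singleton induce_addLeaf fun w => by
    rw [addLeaf_adj_leaf, ← mem_neighborSet, hv, Set.mem_singleton_iff]

variable [Fintype V]

lemma degree_addLeaf_leaf : (T.addLeaf u).degree v = 1 := by
  rw [← card_neighborFinset_eq_degree, card_eq_one]
  exact ⟨u, by ext; simp [addLeaf_adj_leaf]⟩

lemma degree_addLeaf (w : ({v}ᶜ : Set V)) :
    (T.addLeaf u).degree w = T.degree w + if w = u then 1 else 0 := by
  rw [degree_eq_degree_add_of_induce_compl_singleton_eq induce_addLeaf]
  simp [adj_comm _ _ v, addLeaf_adj_leaf, Subtype.ext_iff]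

end addLeaf

section Counting

variable [Fintype V]

noncomputable def treesWithDegrees (c : V → ℕ) : Finset (SimpleGraph V) :=
  {T | T.IsTree ∧ ∀ v, T.degree v = c v}

lemma mem_treesWithDegrees {c : V → ℕ} :
    G ∈ treesWithDegrees c ↔ G.IsTree ∧ ∀ v, G.degree v = c v := by
  simp [treesWithDegrees]

theorem card_treesWithDegrees_eq_sum {l : V → ℕ} (hv : l v = 0) :
    #(treesWithDegrees (l · + 1)) = ∑ u : ({v}ᶜ : Set V),
      #(treesWithDegrees fun w : ({v}ᶜ : Set V) => l w + 1 - if w = u then 1 else 0) := by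
  rw [← card_sigma]
  symm
  refine card_bij (fun p _ => p.2.addLeaf p.1) ?_ ?_ ?_
  · rintro ⟨u, T⟩ hT
    simp only [mem_sigma, mem_univ, true_and, mem_treesWithDegrees] at hT ⊢
    refine ⟨(isTree_iff_induce_compl_singleton degree_addLeaf_leaf).mpr
      (by rw [induce_addLeaf]; exact hT.1), fun x => ?_⟩
    by_cases hx : x = v
    · subst hx
      rw [degree_addLeaf_leaf, hv]
    · rw [degree_addLeaf ⟨x, hx⟩, hT.2]
      dsimp only
      split_ifs <;> omega
  · rintro ⟨u₁, T₁⟩ - ⟨u₂, T₂⟩ - h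
    obtain rfl : u₁ = u₂ :=
      Subtype.ext (addLeaf_adj_leaf.mp (h ▸ (addLeaf_adj_leaf (T := T₁)).mpr rfl))
    obtain rfl : T₁ = T₂ := by
      rw [← induce_addLeaf (T := T₁) (u := u₁), h, induce_addLeaf]
    rfl
  · intro G hG
    rw [mem_treesWithDegrees] at hG
    have hGv : G.degree v = 1 := by rw [hG.2, hv]
    obtain ⟨u, hu⟩ := exists_neighborSet_eq_singleton_of_degree_eq_one hGv
    have huv : u ≠ v := fun h => G.irrefl (v := v) (by rw [← mem_neighborSet, hu, h]; rfl)
    refine ⟨⟨⟨u, huv⟩, G.induce {v}ᶜ⟩, ?_, addLeaf_induce hu⟩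
    simp only [mem_sigma, mem_univ, true_and, mem_treesWithDegrees]
    refine ⟨(isTree_iff_induce_compl_singleton hGv).mp hG.1, fun w => ?_⟩
    have := degree_eq_degree_add_of_induce_compl_singleton_eq (G := G) rfl w
    rw [hG.2] at this
    have hwv : G.Adj w v ↔ w = ⟨u, huv⟩ := by
      rw [G.adj_comm, ← mem_neighborSet, hu, Set.mem_singleton_iff, Subtype.ext_iff]
    simp only [hwv] at this
    split_ifs at this ⊢ <;> omega

lemma treesWithDegrees_eq_empty [Nontrivial V] {c : V → ℕ} (hv : c v = 0) :
    treesWithDegrees c = ∅ := by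
  refine eq_empty_of_forall_notMem fun G hG => ?_
  rw [mem_treesWithDegrees] at hG
  have := hG.1.connected.preconnected.degree_pos_of_nontrivial v
  rw [hG.2 v, hv] at this
  exact this.false

lemma card_treesWithDegrees_zero [Unique V] :
    #(treesWithDegrees fun _ : V => 0) = 1 := by
  rw [card_eq_one]
  refine ⟨⊥, eq_singleton_iff_unique_mem.mpr ⟨?_, fun G _ => Subsingleton.elim _ _⟩⟩
  rw [mem_treesWithDegrees]
  exact ⟨.of_subsingleton, fun _ => by simp⟩

lemma card_treesWithDegrees_mul_prod_factorial_eq_sum {l : V → ℕ} (hv : l v = 0) :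
    #(treesWithDegrees (l · + 1)) * ∏ w, (l w)! = ∑ u : ({v}ᶜ : Set V),
      #(treesWithDegrees fun w : ({v}ᶜ : Set V) => l w + 1 - if w = u then 1 else 0) *
        ∏ w : ({v}ᶜ : Set V), (l w)! := by
  rw [card_treesWithDegrees_eq_sum hv, Fintype.prod_eq_mul_prod_subtype_ne _ v, hv, factorial_zero,
    one_mul, sum_mul]
  rfl

theorem card_treesWithDegrees_mul_prod_factorial (n : ℕ)
    (hV : Fintype.card V = n + 2) (l : V → ℕ) (hl : ∑ v, l v = n) :
    #(treesWithDegrees (l · + 1)) * ∏ v, (l v)! = n ! := by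
  induction n generalizing V with
  | zero =>
    have hl0 : ∀ w, l w = 0 := by simpa using hl
    obtain ⟨v, -⟩ := Fintype.exists_eq_zero_of_sum_lt_card (l := l) (by omega)
    have : Unique ({v}ᶜ : Set V) := (Fintype.card_eq_one_iff_nonempty_unique.mp
      (by rw [Fintype.card_compl_singleton, hV])).some
    rw [card_treesWithDegrees_mul_prod_factorial_eq_sum (hl0 v), Fintype.sum_unique]
    simp [hl0, Subsingleton.elim _ (default : ({v}ᶜ : Set V)), card_treesWithDegrees_zero]
  | succ n ih =>
    obtain ⟨v, hv⟩ := Fintype.exists_eq_zero_of_sum_lt_card (l := l) (by omega)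
    have hV' : Fintype.card ({v}ᶜ : Set V) = n + 2 := by rw [Fintype.card_compl_singleton, hV]; rfl
    have hlV' : ∑ w : ({v}ᶜ : Set V), l w = n + 1 := by
      rw [← hl, Fintype.sum_eq_add_sum_subtype_ne l v, hv, zero_add]; rfl
    rw [card_treesWithDegrees_mul_prod_factorial_eq_sum hv, factorial_succ, ← hlV', sum_mul]
    refine sum_congr rfl fun u _ => ?_
    by_cases hu : l u = 0
    · have : Nontrivial ({v}ᶜ : Set V) := Fintype.one_lt_card_iff_nontrivial.mp (by omega)
      rw [treesWithDegrees_eq_empty (v := u) (by simp [hu]), card_empty, zero_mul, hu, zero_mul]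
    set l' := Function.update (fun w : ({v}ᶜ : Set V) => l w) u (l u - 1)
    have hc : (fun w : ({v}ᶜ : Set V) => l w + 1 - if w = u then 1 else 0) = (l' · + 1) := by
      funext w
      by_cases hw : w = u
      · subst hw
        simp only [l', Function.update_self, if_true]
        omega
      · simp only [l', Function.update_of_ne hw, if_neg hw, tsub_zero]
    have hsum : ∑ w, l' w + 1 = ∑ w : ({v}ᶜ : Set V), l w := Fintype.sum_update_pred_add_one hu
    rw [hc, Fintype.prod_factorial_eq_mul_prod_factorial_update_pred
      (l := fun w : ({v}ᶜ : Set V) => l w) hu, mul_left_comm,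
      ih hV' l' (by omega)]

lemma mem_treesWithDegrees_add_one [Nontrivial V] {l : V → ℕ} :
    G ∈ treesWithDegrees (l · + 1) ↔ G.IsTree ∧ ∀ v, G.degree v - 1 = l v := by
  rw [mem_treesWithDegrees, and_congr_right_iff]
  intro hG
  have hpos := hG.connected.preconnected.degree_pos_of_nontrivial (G := G)
  exact forall_congr' fun v => by have := hpos v; omega

lemma cast_card_treesWithDegrees {R : Type*} [CommSemiring R] [Algebra ℚ R] (n : ℕ)
    (hV : Fintype.card V = n + 2) (l : V → ℕ) (hl : ∑ v, l v = n) :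
    (#(treesWithDegrees (l · + 1)) : R) = n ! * ∏ v, algebraMap ℚ R (1 / (l v)!) := by
  have hq : (#(treesWithDegrees (l · + 1)) : ℚ) = n ! * ∏ v, (1 / ((l v)! : ℚ)) := by
    rw [← card_treesWithDegrees_mul_prod_factorial n hV l hl, prod_div_distrib, prod_const_one]
    push_cast
    field_simp
  rw [← map_natCast (algebraMap ℚ R), hq, map_mul, map_prod, map_natCast]

open PowerSeries in
theorem sum_isTree_prod_degree {R : Type*} [CommSemiring R] [Algebra ℚ R] [DecidableEq V]
    (hV : 2 ≤ Fintype.card V) (f : ℕ → R) :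
    ∑ T ∈ {T : SimpleGraph V | T.IsTree}, ∏ v, f (T.degree v) =
      ((Fintype.card V - 2)! : R) * coeff (Fintype.card V - 2)
        (PowerSeries.mk (fun k => algebraMap ℚ R (1 / k !) * f (k + 1)) ^ Fintype.card V) := by
  obtain ⟨n, hn⟩ := Nat.exists_eq_add_of_le' hV
  have : Nontrivial V := Fintype.one_lt_card_iff_nontrivial.mp (by omega)
  rw [← Finset.card_univ, ← prod_const, coeff_prod, Finset.card_univ, hn, add_tsub_cancel_right,
    mul_sum]
  simp only [coeff_mk]
  have hmaps : ∀ T ∈ ({T | T.IsTree} : Finset (SimpleGraph V)),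
      (Finsupp.equivFunOnFinite.symm fun v => T.degree v - 1) ∈ univ.finsuppAntidiag n := by
    intro T hT
    rw [mem_filter] at hT
    simp only [mem_finsuppAntidiag, Finsupp.coe_equivFunOnFinite_symm, subset_univ, and_true]
    have := hT.2.sum_degree_sub_one_add_two
    omega
  rw [← sum_fiberwise_of_maps_to hmaps (f := fun T : SimpleGraph V => ∏ v, f (T.degree v))]
  refine Finset.sum_congr rfl fun l hl => ?_
  rw [mem_finsuppAntidiag] at hl
  have hfib : ({T | T.IsTree} : Finset (SimpleGraph V)).filter
      (fun T => (Finsupp.equivFunOnFinite.symm fun v => T.degree v - 1) = l) =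
      treesWithDegrees (l · + 1) := by
    ext T
    simp only [mem_filter, mem_univ, true_and, mem_treesWithDegrees_add_one, DFunLike.ext_iff,
      Finsupp.coe_equivFunOnFinite_symm]
  rw [hfib, sum_congr rfl fun T hT => prod_congr rfl fun v _ => by
      rw [(mem_treesWithDegrees.mp hT).2 v], sum_const, nsmul_eq_mul, prod_mul_distrib, ← mul_assoc,
    cast_card_treesWithDegrees n hn l (by simpa using hl.1)]

end Counting

end SimpleGraph

open PowerSeries in
lemma PowerSeries.mk_eq_exp_add_monomial {A : Type*} [CommRing A] [Algebra ℚ A] {d : ℕ}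
    (hd : 0 < d) (g : A) :
    mk (fun k => algebraMap ℚ A (1 / k !) * if k + 1 = d then g else 1) =
      exp A + monomial (d - 1) ((g - 1) * algebraMap ℚ A (1 / (d - 1)!)) := by
  ext k
  rw [coeff_mk, map_add, coeff_exp, coeff_monomial]
  by_cases hk : k = d - 1
  · rw [if_pos (by omega), if_pos hk, hk]
    ring
  · rw [if_neg (by omega), if_neg hk, mul_one, add_zero]

/-- For a positive integer `d` and `n ≥ 2`, with `X_d(T)` the number
of vertices of degree `d` of a labeled tree `T` on `Fin n`, the polynomial
`∑_T g^(X_d(T))` in `ℚ[g]` equals `(n-2)!` times the coefficient of `z^(n-2)` in the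
power series `(e^z + (g-1)·z^(d-1)/(d-1)!)^n` with coefficients in `ℚ[g]`. -/
theorem prob_gen_function_X_d (d : ℕ) (hd : 0 < d) (n : ℕ) (hn : 2 ≤ n) :
    (∑ G ∈ Finset.univ.filter (fun G : SimpleGraph (Fin n) =>
        G.Connected ∧ G.IsAcyclic),
      (Polynomial.X : Polynomial ℚ) ^
        (Finset.univ.filter (fun v : Fin n => G.degree v = d)).card) =
      (Nat.factorial (n - 2) : Polynomial ℚ) *
        PowerSeries.coeff (R := Polynomial ℚ) (n - 2)
          ((PowerSeries.exp (Polynomial ℚ) +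
              PowerSeries.monomial (R := Polynomial ℚ) (d - 1)
                ((Polynomial.X - 1) *
                  Polynomial.C ((1 : ℚ) / (Nat.factorial (d - 1))))) ^ n) := by
  have hpow (G : SimpleGraph (Fin n)) :
      Polynomial.X ^ #{v | G.degree v = d} =
        ∏ v, if G.degree v = d then (Polynomial.X : Polynomial ℚ) else 1 := by
    rw [← prod_const, prod_filter]
  have htrees : (univ.filter fun G : SimpleGraph (Fin n) => G.Connected ∧ G.IsAcyclic) =
      univ.filter fun T => T.IsTree := by
    simp only [SimpleGraph.isTree_iff]
  rw [htrees, sum_congr rfl fun G _ => hpow G,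
    SimpleGraph.sum_isTree_prod_degree (by simpa using hn)
      (fun k => if k = d then (Polynomial.X : Polynomial ℚ) else 1), ← Polynomial.algebraMap_eq,
    ← PowerSeries.mk_eq_exp_add_monomial hd, Fintype.card_fin]
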